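/- Constancy of intersection count under a transversal homotopy: Let V ⊂ ℝᴺ be a compact C¹ submanifold of codimension n, and let F_t : B → ℝᴺ, t ∈ [0,1], be a continuous family of C¹ maps from a compact n-dimensional manifold-with-boundary B such that for every t, F_t is transverse to V and F_t(∂B) ∩ V = ∅. Then the cardinality #(F_t^{-1}(V)) is finite and independent of t. -/

import Mathlib

/-!
Write `Φ t x = G (F t x)`, so that `F t ⁻¹' V` is the zero set of `Φ t`, and transversality says
that `D(Φ t)` is invertible at every zero. Near a zero `p` of `Φ t₀` the derivative of `Φ t` stays
uniformly close to the invertible map `D(Φ t₀) p` for `(t, x)` near `(t₀, p)`, so the quantitative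
inverse function estimates give exactly one zero of `Φ t` in every small ball around `p`, for all
`t` near `t₀`. Off these balls, `Φ t₀` has no zero on a compact set, hence neither has `Φ t` for `t`
near `t₀`; the boundary condition keeps the balls inside `B`. So the count is locally constant in
`t`, hence constant on the connected interval `[0, 1]`.
-/

open Set Metric Filter Function Topology

theorem ContinuousLinearMap.isInvertible_of_surjective {E : Type*} [NormedAddCommGroup E]
    [NormedSpace ℝ E] [FiniteDimensional ℝ E] {A : E →L[ℝ] E} (hA : Surjective A) :
    A.IsInvertible :=
  ⟨(LinearEquiv.ofBijective (A : E →ₗ[ℝ] E)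
    ⟨LinearMap.injective_iff_surjective.2 hA, hA⟩).toContinuousLinearEquiv, rfl⟩

section ParametrizedZeros

variable {T E F : Type*} [TopologicalSpace T]
  [NormedAddCommGroup E] [NormedSpace ℝ E] [CompleteSpace E]
  [NormedAddCommGroup F] [NormedSpace ℝ F]
  {Φ : T → E → F} {Φ' : T → E → E →L[ℝ] F}

theorem eventually_existsUnique_zero_mem_closedBall (hΦ : Continuous (uncurry Φ))
    (hΦ' : Continuous (uncurry Φ')) (hderiv : ∀ t x, HasFDerivAt (Φ t) (Φ' t x) x)
    {t₀ : T} {p : E} (hp : Φ t₀ p = 0) (hinv : (Φ' t₀ p).IsInvertible) :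
    ∀ᶠ r in 𝓝[>] 0, ∀ᶠ t in 𝓝 t₀, ∃! x, x ∈ closedBall p r ∧ Φ t x = 0 := by
  obtain ⟨e, he⟩ := hinv
  rcases subsingleton_or_nontrivial E with hE | hE
  · have : Subsingleton F := (Equiv.subsingleton_congr e.toEquiv).1 hE
    filter_upwards [self_mem_nhdsWithin] with r (hr : 0 < r)
    exact .of_forall fun t => ⟨p, ⟨mem_closedBall_self hr.le, Subsingleton.elim _ _⟩,
      fun _ _ => Subsingleton.elim _ _⟩
  set N := ‖(e.symm : F →L[ℝ] E)‖₊
  have hN : 0 < N := by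
    obtain ⟨x, hx⟩ := exists_ne (0 : E)
    refine nnnorm_pos.2 fun h => hx ?_
    have hx' : (e.symm : F →L[ℝ] E) (e x) = x := e.symm_apply_apply x
    rw [h, zero_apply] at hx'
    exact hx'.symm
  -- Any `c < N⁻¹` works: it gives injectivity, and a ball of radius `(N⁻¹ - c) * r` in the image.
  set c : NNReal := N⁻¹ / 2
  have hcN : c < N⁻¹ := NNReal.half_lt_self (inv_pos.2 hN).ne'
  obtain ⟨u, hu, v, hv, huv⟩ := mem_nhds_prod_iff.1 <| hΦ'.continuousAt.preimage_mem_nhds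
    (closedBall_mem_nhds (Φ' t₀ p) (half_pos (inv_pos.2 hN) : (0 : ℝ) < c))
  filter_upwards [nhdsWithin_le_nhds (eventually_closedBall_subset hv), self_mem_nhdsWithin]
    with r hrv (hr : 0 < r)
  have hρ : 0 < ((N⁻¹ : NNReal) - c : ℝ) * r := mul_pos (sub_pos.2 hcN) hr
  have hΦp : Tendsto (Φ · p) (𝓝 t₀) (𝓝 0) :=
    hp ▸ (hΦ.comp (continuous_id.prodMk continuous_const)).tendsto t₀
  filter_upwards [hu, hΦp.eventually (closedBall_mem_nhds 0 hρ)] with t ht htp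
  have happrox : ApproximatesLinearOn (Φ t) (e : E →L[ℝ] F) (closedBall p r) c :=
    fun x hx y hy => Convex.norm_image_sub_le_of_norm_hasFDerivWithin_le'
      (fun z _ => (hderiv t z).hasFDerivWithinAt)
      (fun z hz => by
        have h := huv (mk_mem_prod ht (hrv hz))
        rw [mem_preimage, ← he] at h
        exact mem_closedBall_iff_norm.1 h)
      (convex_closedBall p r) hy hx
  obtain ⟨x, hx, hx0⟩ := happrox.surjOn_closedBall_of_nonlinearRightInverse
    e.toNonlinearRightInverse hr.le Subset.rfl (mem_closedBall_comm.1 htp)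
  exact ⟨x, ⟨hx, hx0⟩, fun y hy => happrox.injOn (.inr hcN) hy.1 hx (hy.2.trans hx0.symm)⟩

theorem finite_zeros_of_isInvertible (hΦ : Continuous (uncurry Φ))
    (hΦ' : Continuous (uncurry Φ')) (hderiv : ∀ t x, HasFDerivAt (Φ t) (Φ' t x) x)
    {K : Set E} (hK : IsCompact K) (hinv : ∀ t, ∀ x ∈ K, Φ t x = 0 → (Φ' t x).IsInvertible)
    (t : T) : {x ∈ K | Φ t x = 0}.Finite := by
  refine (hK.inter_right (isClosed_eq (hΦ.uncurry_left t) continuous_const)).finite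
    (isDiscrete_iff_forall_mem_exists_isOpen.2 fun p ⟨hpK, hp⟩ => ?_)
  obtain ⟨r, hunique, hr⟩ := ((eventually_existsUnique_zero_mem_closedBall hΦ hΦ' hderiv hp
    (hinv t p hpK hp)).and self_mem_nhdsWithin).exists
  obtain ⟨x, -, hx⟩ := hunique.self_of_nhds
  refine ⟨ball p r, isOpen_ball, Subset.antisymm ?_ ?_⟩
  · rintro y ⟨hy, -, hy0⟩
    exact (hx y ⟨ball_subset_closedBall hy, hy0⟩).trans
      (hx p ⟨mem_closedBall_self hr.le, hp⟩).symm
  · rintro y rfl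
    exact ⟨mem_ball_self hr, hpK, hp⟩

theorem eventually_ncard_zeros_eq (hΦ : Continuous (uncurry Φ))
    (hΦ' : Continuous (uncurry Φ')) (hderiv : ∀ t x, HasFDerivAt (Φ t) (Φ' t x) x)
    {K : Set E} (hK : IsCompact K) (hinv : ∀ t, ∀ x ∈ K, Φ t x = 0 → (Φ' t x).IsInvertible)
    (hint : ∀ t, ∀ x ∈ K, Φ t x = 0 → x ∈ interior K) (t₀ : T) :
    ∀ᶠ t in 𝓝 t₀, {x ∈ K | Φ t x = 0}.ncard = {x ∈ K | Φ t₀ x = 0}.ncard := by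
  set Z := {x ∈ K | Φ t₀ x = 0}
  have hZ : Z.Finite := finite_zeros_of_isInvertible hΦ hΦ' hderiv hK hinv t₀
  obtain ⟨r, ⟨hrK, hdisj, hunique⟩, hr⟩ : ∃ r, ((∀ p ∈ Z, closedBall p r ⊆ K) ∧
      (∀ p ∈ Z, ∀ q ∈ Z, p ≠ q → Disjoint (closedBall p r) (closedBall q r)) ∧
      ∀ p ∈ Z, ∀ᶠ t in 𝓝 t₀, ∃! x, x ∈ closedBall p r ∧ Φ t x = 0) ∧ 0 < r := by
    refine Eventually.exists (f := 𝓝[>] (0 : ℝ)) (.and (.and ?_ (.and ?_ ?_)) self_mem_nhdsWithin)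
    · refine nhdsWithin_le_nhds ((eventually_all_finite hZ).2 fun p ⟨hpK, hp⟩ => ?_)
      exact eventually_closedBall_subset (mem_interior_iff_mem_nhds.1 (hint t₀ p hpK hp))
    · refine nhdsWithin_le_nhds ((eventually_all_finite hZ).2 fun p _ =>
        (eventually_all_finite hZ).2 fun q _ => ?_)
      rcases eq_or_ne p q with rfl | hpq
      · exact .of_forall fun _ h => absurd rfl h
      · filter_upwards [eventually_lt_nhds (half_pos (dist_pos.2 hpq))] with r hr _
        exact closedBall_disjoint_closedBall (by linarith)
    · exact (eventually_all_finite hZ).2 fun p ⟨hpK, hp⟩ =>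
        eventually_existsUnique_zero_mem_closedBall hΦ hΦ' hderiv hp (hinv t₀ p hpK hp)
  have haway : ∀ᶠ t in 𝓝 t₀, ∀ x ∈ K \ ⋃ p ∈ Z, ball p r, Φ t x ≠ 0 := by
    refine (hK.diff (isOpen_biUnion fun _ _ => isOpen_ball)).eventually_forall_of_forall_eventually
      fun x ⟨hxK, hx⟩ => hΦ.continuousAt.eventually_ne fun h0 => hx ?_
    exact mem_biUnion (show x ∈ Z from ⟨hxK, h0⟩) (mem_ball_self hr)
  filter_upwards [haway, (eventually_all_finite hZ).2 hunique] with t haway hunique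
  choose z hz hzu using hunique
  refine (ncard_congr z ?_ ?_ ?_).symm
  · exact fun p hp => ⟨hrK p hp (hz p hp).1, (hz p hp).2⟩
  · intro p q hp hq hpq
    by_contra hne
    exact (hdisj p hp q hq hne).ne_of_mem (hz p hp).1 (hpq ▸ (hz q hq).1) rfl
  · rintro y ⟨hyK, hy⟩
    obtain ⟨p, hp, hyp⟩ := mem_iUnion₂.1 (not_not.1 fun h => haway y ⟨hyK, h⟩ hy)
    exact ⟨p, hp, (hzu p hp y ⟨ball_subset_closedBall hyp, hy⟩).symm⟩

theorem ncard_zeros_eq_of_preconnectedSpace [PreconnectedSpace T] (hΦ : Continuous (uncurry Φ))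
    (hΦ' : Continuous (uncurry Φ')) (hderiv : ∀ t x, HasFDerivAt (Φ t) (Φ' t x) x)
    {K : Set E} (hK : IsCompact K) (hinv : ∀ t, ∀ x ∈ K, Φ t x = 0 → (Φ' t x).IsInvertible)
    (hint : ∀ t, ∀ x ∈ K, Φ t x = 0 → x ∈ interior K) (t s : T) :
    {x ∈ K | Φ t x = 0}.ncard = {x ∈ K | Φ s x = 0}.ncard :=
  ((IsLocallyConstant.iff_eventually_eq _).2 (eventually_ncard_zeros_eq hΦ hΦ' hderiv hK hinv hint))
    |>.apply_eq_of_preconnectedSpace t s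

end ParametrizedZeros

theorem stmt19_general (n N : ℕ)
    (G : (Fin N → ℝ) → (Fin n → ℝ)) (hG : ContDiff ℝ 1 G)
    (V : Set (Fin N → ℝ)) (hV : V = G ⁻¹' {0})
    (F : ℝ → (Fin n → ℝ) → (Fin N → ℝ))
    (hFsm : ∀ t ∈ Icc (0 : ℝ) 1, ContDiff ℝ 1 (F t))
    (hFcont : Continuous fun q : ℝ × (Fin n → ℝ) => F q.1 q.2)
    (hDcont : Continuous fun q : ℝ × (Fin n → ℝ) => fderiv ℝ (F q.1) q.2)
    (htrans : ∀ t ∈ Icc (0 : ℝ) 1, ∀ x ∈ closedBall (0 : Fin n → ℝ) 1,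
      F t x ∈ V → Function.Surjective ⇑((fderiv ℝ G (F t x)).comp (fderiv ℝ (F t) x)))
    (hbd : ∀ t ∈ Icc (0 : ℝ) 1, ∀ x ∈ sphere (0 : Fin n → ℝ) 1, F t x ∉ V) :
    ∀ t ∈ Icc (0 : ℝ) 1,
      {x ∈ closedBall (0 : Fin n → ℝ) 1 | F t x ∈ V}.Finite ∧
      {x ∈ closedBall (0 : Fin n → ℝ) 1 | F t x ∈ V}.ncard =
        {x ∈ closedBall (0 : Fin n → ℝ) 1 | F 0 x ∈ V}.ncard := by
  subst hV
  let Φ : Icc (0 : ℝ) 1 → (Fin n → ℝ) → (Fin n → ℝ) := fun t x => G (F t x)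
  let Φ' : Icc (0 : ℝ) 1 → (Fin n → ℝ) → (Fin n → ℝ) →L[ℝ] (Fin n → ℝ) :=
    fun t x => (fderiv ℝ G (F t x)).comp (fderiv ℝ (F t) x)
  have hrestrict : Continuous fun q : Icc (0 : ℝ) 1 × (Fin n → ℝ) => ((q.1 : ℝ), q.2) :=
    continuous_subtype_val.prodMap continuous_id
  have hΦ : Continuous (uncurry Φ) := hG.continuous.comp (hFcont.comp hrestrict)
  have hΦ' : Continuous (uncurry Φ') :=
    (((hG.continuous_fderiv one_ne_zero).comp hFcont).clm_comp hDcont).comp hrestrict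
  have hderiv (t x) : HasFDerivAt (Φ t) (Φ' t x) x :=
    (hG.differentiable one_ne_zero _).hasFDerivAt.comp x
      ((hFsm t t.2).differentiable one_ne_zero x).hasFDerivAt
  have hinv (t) (x) (hx : x ∈ closedBall 0 1) (h0 : Φ t x = 0) : (Φ' t x).IsInvertible :=
    ContinuousLinearMap.isInvertible_of_surjective (htrans t t.2 x hx h0)
  have hint (t) (x) (hx : x ∈ closedBall 0 1) (h0 : Φ t x = 0) : x ∈ interior (closedBall 0 1) :=
    ball_subset_interior_closedBall <| mem_ball.2 <|
      (mem_closedBall.1 hx).lt_of_ne fun h => hbd t t.2 x (mem_sphere.2 h) h0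
  intro t ht
  exact ⟨finite_zeros_of_isInvertible hΦ hΦ' hderiv (isCompact_closedBall 0 1) hinv ⟨t, ht⟩,
    ncard_zeros_eq_of_preconnectedSpace hΦ hΦ' hderiv (isCompact_closedBall 0 1) hinv hint
      ⟨t, ht⟩ ⟨0, left_mem_Icc.2 zero_le_one⟩⟩

/-- Constancy of the intersection count under a transversal homotopy.  `V` is
the compact codimension-`n` submanifold `G⁻¹(0)` of `ℝᴺ` cut out by a C¹
submersion `G`, `B` is the closed unit ball in `ℝⁿ`, and `F t` is a continuous
family of C¹ maps (with continuously varying differentials), each transverse to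
`V` on `B` and missing `V` on the boundary sphere.  Then `#(F t)⁻¹(V) ∩ B` is
finite and independent of `t`. -/
theorem stmt19 (n N : ℕ)
    (G : (Fin N → ℝ) → (Fin n → ℝ)) (hG : ContDiff ℝ 1 G)
    (V : Set (Fin N → ℝ)) (hV : V = G ⁻¹' {0}) (hVcpt : IsCompact V)
    (hGsub : ∀ p ∈ V, Function.Surjective ⇑(fderiv ℝ G p))
    (F : ℝ → (Fin n → ℝ) → (Fin N → ℝ))
    (hFsm : ∀ t ∈ Icc (0 : ℝ) 1, ContDiff ℝ 1 (F t))
    (hFcont : Continuous fun q : ℝ × (Fin n → ℝ) => F q.1 q.2)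
    (hDcont : Continuous fun q : ℝ × (Fin n → ℝ) => fderiv ℝ (F q.1) q.2)
    (htrans : ∀ t ∈ Icc (0 : ℝ) 1, ∀ x ∈ closedBall (0 : Fin n → ℝ) 1,
      F t x ∈ V → Function.Surjective ⇑((fderiv ℝ G (F t x)).comp (fderiv ℝ (F t) x)))
    (hbd : ∀ t ∈ Icc (0 : ℝ) 1, ∀ x ∈ sphere (0 : Fin n → ℝ) 1, F t x ∉ V) :
    ∀ t ∈ Icc (0 : ℝ) 1,
      {x ∈ closedBall (0 : Fin n → ℝ) 1 | F t x ∈ V}.Finite ∧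
      {x ∈ closedBall (0 : Fin n → ℝ) 1 | F t x ∈ V}.ncard =
        {x ∈ closedBall (0 : Fin n → ℝ) 1 | F 0 x ∈ V}.ncard :=
  stmt19_general n N G hG V hV F hFsm hFcont hDcont htrans hbd
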